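/- arXiv:2512.06585 — 2 statements merged into one kernel-verified Lean document; each statement's English description precedes it below -/
import Mathlib

section
/- For every integer n ≥ 2 there exist constants κ > 0 and m₀ (depending only on n) such that for every integer m ≥ m₀ and every integer z with 1 ≤ z ≤ 2^{κ√m} there exist z ordered partitions A_1, …, A_z of [m], each into n labeled (possibly empty) parts A_{ℓ,1}, …, A_{ℓ,n}, such that for every subset T ⊆ [n] and every injective map ℓ : T → [z], |∪_{i∈T} A_{ℓ(i),i}| ≤ (1 − (1 − 1/n)^{|T|})·m + m^{3/4}. -/
/-!
Encode `z` partitions of `[m]` by a map `ω : [m] → [n]^[z]`, putting `x` into part `ω x ℓ` of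
partition `ℓ`, and count maps `ω` as a uniform random choice. For fixed `T` and `f` injective on
`T`, the coordinates `ω x (f i)`, `i ∈ T`, are distinct, so each `x` lies in `⋃ i ∈ T, A (f i) i`
independently with probability `1 - (1 - 1/n)^|T|`. An exponential-moment (Chernoff) bound with
tilt `m^{-1/4}/2` shows that the union exceeds its mean by `m^{3/4}` for at most a fraction
`e^{-√m/4}` of all `ω`. A union bound over the at most `(2z)^n` pairs `(T, f)` leaves a good `ω`
as soon as `(2z)^n < e^{√m/4}`, which holds for `z ≤ 2^{√m/(8n)}` and `m ≥ 64 n²`.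
-/

open Finset Real

theorem card_filter_lt_mul_exp_le_sum {β : Type*} (s : Finset β) (g : β → ℝ) (K : ℝ)
    {t : ℝ} (ht : 0 ≤ t) : #{b ∈ s | K < g b} * exp (t * K) ≤ ∑ b ∈ s, exp (t * g b) := by
  calc #{b ∈ s | K < g b} * exp (t * K) ≤ ∑ b ∈ s with K < g b, exp (t * g b) := by
        rw [← nsmul_eq_mul]
        exact card_nsmul_le_sum _ _ _ fun b hb =>
          exp_le_exp.2 (mul_le_mul_of_nonneg_left (mem_filter.1 hb).2.le ht)
    _ ≤ ∑ b ∈ s, exp (t * g b) :=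
        sum_le_sum_of_subset_of_nonneg (filter_subset _ _) fun _ _ _ => (exp_pos _).le

-- `r` plays the role of `m^{1/4}` and `1 / (2 * r)` is the tilt of the Chernoff bound.
theorem chernoff_exponent_le {r p : ℝ} (hr : 1 ≤ r) (hp₀ : 0 ≤ p) (hp₁ : p ≤ 1) :
    r ^ 4 * p * (exp (1 / (2 * r)) - 1) - 1 / (2 * r) * (p * r ^ 4 + r ^ 3) ≤ -(r ^ 2 / 4) := by
  set t := 1 / (2 * r) with ht
  have ht₀ : 0 ≤ t := by positivity
  have ht₁ : t ≤ 1 := by rw [ht, div_le_one (by positivity)]; linarith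
  have hexp : exp t - 1 ≤ t + t ^ 2 := by
    have := (abs_le.1 (abs_exp_sub_one_sub_id_le (abs_le.2 ⟨by linarith, ht₁⟩))).2
    linarith
  have hr₀ : 0 < r := by linarith
  calc r ^ 4 * p * (exp t - 1) - t * (p * r ^ 4 + r ^ 3)
      ≤ r ^ 4 * p * (t + t ^ 2) - t * (p * r ^ 4 + r ^ 3) := by gcongr
    _ = p * (r ^ 4 * t ^ 2) - t * r ^ 3 := by ring
    _ ≤ r ^ 4 * t ^ 2 - t * r ^ 3 := by
        linarith [mul_le_of_le_one_left (by positivity : 0 ≤ r ^ 4 * t ^ 2) hp₁]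
    _ = -(r ^ 2 / 4) := by rw [ht]; field_simp; ring

section Chernoff

variable {α : Type*} [Fintype α] (P : α → Prop) [DecidablePred P]

theorem sum_exp_mul_card_filter (m : ℕ) (t : ℝ) :
    ∑ ω : Fin m → α, exp (t * #{x | P (ω x)}) =
      (Fintype.card α + #{a | P a} * (exp t - 1)) ^ m := by
  have hterm (ω : Fin m → α) :
      exp (t * #{x | P (ω x)}) = ∏ x, if P (ω x) then exp t else 1 := by
    rw [prod_ite, prod_const, prod_const, one_pow, mul_one, ← exp_nat_mul, mul_comm]
  have hcol : ∑ a : α, (if P a then exp t else 1) =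
      Fintype.card α + #{a | P a} * (exp t - 1) := by
    have hsplit : (#{a | P a} + #{a | ¬P a} : ℝ) = Fintype.card α := by
      exact_mod_cast card_filter_add_card_filter_not (s := univ) P
    rw [sum_ite, sum_const, sum_const, nsmul_eq_mul, nsmul_eq_mul, mul_one, ← hsplit]
    ring
  simp_rw [hterm, ← hcol, ← Fintype.prod_sum (fun (_ : Fin m) a => if P a then exp t else 1),
    prod_const, card_univ, Fintype.card_fin]

theorem card_filter_lt_card_filter_apply_le {m : ℕ} (hm : 0 < m) :
    (#{ω : Fin m → α | (#{a | P a} / Fintype.card α : ℝ) * m + (m : ℝ) ^ ((3 : ℝ) / 4) <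
        #{x | P (ω x)}} : ℝ) ≤ Fintype.card α ^ m * exp (-(√m / 4)) := by
  have hPN : (#{a | P a} : ℝ) ≤ Fintype.card α := by
    exact_mod_cast (card_filter_le univ P).trans_eq card_univ
  have hNp : (Fintype.card α : ℝ) * (#{a | P a} / Fintype.card α) = #{a | P a} := by
    rcases eq_or_ne (Fintype.card α : ℝ) 0 with hN | hN
    · rw [hN, zero_mul]
      linarith [(#{a | P a}).cast_nonneg (α := ℝ)]
    · exact mul_div_cancel₀ _ hN
  have hp₀ : (0 : ℝ) ≤ #{a | P a} / Fintype.card α := by positivity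
  have hp₁ : (#{a | P a} / Fintype.card α : ℝ) ≤ 1 := div_le_one_of_le₀ hPN (Nat.cast_nonneg _)
  generalize (#{a | P a} / Fintype.card α : ℝ) = p at *
  have hm₀ : (0 : ℝ) < m := by exact_mod_cast hm
  set r : ℝ := (m : ℝ) ^ ((1 : ℝ) / 4)
  have hr_pow (k : ℕ) : r ^ k = (m : ℝ) ^ ((k : ℝ) / 4) := by
    rw [← rpow_natCast, ← rpow_mul hm₀.le, one_div_mul_eq_div]
  have hr₁ : 1 ≤ r := one_le_rpow (by exact_mod_cast hm) (by norm_num)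
  have hm_eq : (m : ℝ) = r ^ 4 := by rw [hr_pow]; norm_num
  have hm_pow : (m : ℝ) ^ ((3 : ℝ) / 4) = r ^ 3 := by rw [hr_pow]; norm_num
  have hsqrt : √m = r ^ 2 := by rw [hr_pow, sqrt_eq_rpow]; norm_num
  set t := 1 / (2 * r)
  have ht₀ : 0 ≤ t := by positivity
  have hmarkov := card_filter_lt_mul_exp_le_sum univ
    (fun ω : Fin m → α => (#{x | P (ω x)} : ℝ)) (p * m + (m : ℝ) ^ ((3 : ℝ) / 4)) ht₀
  rw [sum_exp_mul_card_filter, ← hNp, ← le_div_iff₀ (exp_pos _)] at hmarkov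
  have hmgf : (Fintype.card α + Fintype.card α * p * (exp t - 1)) ^ m ≤
      (Fintype.card α : ℝ) ^ m * exp (m * (p * (exp t - 1))) := by
    rw [mul_assoc, ← mul_one_add, mul_pow, exp_nat_mul]
    gcongr
    · exact add_nonneg zero_le_one (mul_nonneg hp₀ (sub_nonneg.2 (one_le_exp ht₀)))
    · linarith [add_one_le_exp (p * (exp t - 1))]
  have hexponent : m * (p * (exp t - 1)) - t * (p * m + (m : ℝ) ^ ((3 : ℝ) / 4)) ≤ -(√m / 4) := by
    have := chernoff_exponent_le hr₁ hp₀ hp₁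
    rw [hm_pow, hsqrt, hm_eq]
    linarith
  calc _ ≤ _ := hmarkov
    _ ≤ (Fintype.card α : ℝ) ^ m * exp (m * (p * (exp t - 1))) /
          exp (t * (p * m + (m : ℝ) ^ ((3 : ℝ) / 4))) := by gcongr
    _ = (Fintype.card α : ℝ) ^ m *
          exp (m * (p * (exp t - 1)) - t * (p * m + (m : ℝ) ^ ((3 : ℝ) / 4))) := by
        rw [exp_sub, mul_div_assoc]
    _ ≤ _ := by gcongr

end Chernoff

theorem card_filter_forall_apply_ne {ι κ : Type*} [Fintype ι] [DecidableEq ι] [Fintype κ]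
    [DecidableEq κ] {T : Finset ι} {f : ι → κ} (hf : Set.InjOn f T) :
    #{c : κ → ι | ∀ i ∈ T, c (f i) ≠ i} =
      (Fintype.card ι - 1) ^ #T * Fintype.card ι ^ (Fintype.card κ - #T) := by
  have hpi : ({c : κ → ι | ∀ i ∈ T, c (f i) ≠ i} : Finset _) =
      Fintype.piFinset fun ℓ => {v | ∀ i ∈ T, f i = ℓ → v ≠ i} := by
    ext c
    simp only [mem_filter, mem_univ, true_and, Fintype.mem_piFinset]
    exact ⟨fun h ℓ i hi hℓ => hℓ ▸ h i hi, fun h i hi => h _ i hi rfl⟩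
  have hfiber (ℓ : κ) : #{v : ι | ∀ i ∈ T, f i = ℓ → v ≠ i} =
      if ℓ ∈ T.image f then Fintype.card ι - 1 else Fintype.card ι := by
    split_ifs with hℓ
    · obtain ⟨i₀, hi₀, rfl⟩ := mem_image.1 hℓ
      have : ({v : ι | ∀ i ∈ T, f i = f i₀ → v ≠ i} : Finset _) = univ.erase i₀ := by
        ext v
        simp only [mem_filter, mem_univ, true_and, mem_erase, and_true]
        exact ⟨fun h => h i₀ hi₀ rfl, fun hv i hi hfi => hf hi hi₀ hfi ▸ hv⟩
      rw [this, card_erase_of_mem (mem_univ _), card_univ]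
    · rw [filter_true_of_mem fun v _ i hi hfi => absurd (mem_image.2 ⟨i, hi, hfi⟩) hℓ,
        card_univ]
  rw [hpi, Fintype.card_piFinset]
  simp_rw [hfiber]
  rw [prod_ite, prod_const, prod_const, filter_mem_eq_inter, univ_inter, card_image_of_injOn hf,
    filter_notMem_eq_sdiff, card_univ_sdiff, card_image_of_injOn hf]

theorem card_filter_exists_apply_eq_div {ι κ : Type*} [Fintype ι] [DecidableEq ι] [Nonempty ι]
    [Fintype κ] [DecidableEq κ] {T : Finset ι} {f : ι → κ} (hf : Set.InjOn f T) :
    (#{c : κ → ι | ∃ i ∈ T, c (f i) = i} / Fintype.card (κ → ι) : ℝ) =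
      1 - (1 - 1 / Fintype.card ι) ^ #T := by
  have hT : #T ≤ Fintype.card κ := by
    simpa using card_le_card_of_injOn f (fun i _ => mem_univ (f i)) hf
  have hι : (0 : ℝ) < Fintype.card ι := by exact_mod_cast Fintype.card_pos
  have hsplit := card_filter_add_card_filter_not (s := (univ : Finset (κ → ι)))
    fun c => ∃ i ∈ T, c (f i) = i
  simp only [not_exists, not_and] at hsplit
  rw [card_filter_forall_apply_ne hf, card_univ, Fintype.card_fun] at hsplit
  have hhit : (#{c : κ → ι | ∃ i ∈ T, c (f i) = i} : ℝ) = Fintype.card ι ^ Fintype.card κ -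
      (Fintype.card ι - 1) ^ #T * Fintype.card ι ^ (Fintype.card κ - #T) := by
    rw [eq_sub_iff_add_eq, ← Nat.cast_pred Fintype.card_pos]
    exact_mod_cast hsplit
  rw [hhit, Fintype.card_fun, Nat.cast_pow, ← Nat.add_sub_cancel' hT, pow_add,
    Nat.add_sub_cancel_left, one_sub_div hι.ne', div_pow]
  field_simp

section FiberPartition

variable {α ι κ : Type*} [Fintype α] [DecidableEq ι]

def fiberPartition (ω : α → κ → ι) (ℓ : κ) (i : ι) : Finset α := {x | ω x ℓ = i}

theorem disjoint_fiberPartition (ω : α → κ → ι) (ℓ : κ) {i j : ι} (hij : i ≠ j) :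
    Disjoint (fiberPartition ω ℓ i) (fiberPartition ω ℓ j) :=
  disjoint_filter.2 fun _ _ hi hj => hij (hi ▸ hj)

theorem biUnion_fiberPartition [Fintype ι] [DecidableEq α] (ω : α → κ → ι) (ℓ : κ) :
    univ.biUnion (fiberPartition ω ℓ) = univ :=
  biUnion_filter_eq_of_maps_to fun _ _ => mem_univ _

theorem biUnion_fiberPartition_eq_filter [DecidableEq α] (ω : α → κ → ι) (T : Finset ι)
    (f : ι → κ) :
    T.biUnion (fun i => fiberPartition ω (f i) i) = ({x | ∃ i ∈ T, ω x (f i) = i} : Finset α) := by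
  ext x
  simp [fiberPartition]

end FiberPartition

theorem card_filter_lt_card_biUnion_fiberPartition_le {ι κ : Type*} [Fintype ι] [DecidableEq ι]
    [Nonempty ι] [Fintype κ] [DecidableEq κ] {m : ℕ} (hm : 0 < m) {T : Finset ι} {f : ι → κ}
    (hf : Set.InjOn f T) :
    (#{ω : Fin m → κ → ι | (1 - (1 - 1 / Fintype.card ι : ℝ) ^ #T) * m + (m : ℝ) ^ ((3 : ℝ) / 4) <
        #(T.biUnion fun i => fiberPartition ω (f i) i)} : ℝ) ≤
      Fintype.card (κ → ι) ^ m * exp (-(√m / 4)) := by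
  simp_rw [biUnion_fiberPartition_eq_filter, ← card_filter_exists_apply_eq_div hf]
  exact card_filter_lt_card_filter_apply_le _ hm

theorem exists_forall_not_of_sum_card_lt {Ω β : Type*} [Fintype Ω] (I : Finset β)
    (B : β → Ω → Prop) [∀ i, DecidablePred (B i)]
    (h : ∑ i ∈ I, #{ω | B i ω} < Fintype.card Ω) : ∃ ω, ∀ i ∈ I, ¬B i ω := by
  classical
  by_contra! hcover
  refine h.not_ge (le_trans ?_ card_biUnion_le)
  rw [← card_univ]
  exact card_le_card fun ω _ => by simpa using hcover ω

theorem two_mul_pow_lt_exp {n : ℕ} (hn : 0 < n) {s z : ℝ} (hz₀ : 0 ≤ z) (hs : 8 * n ≤ s)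
    (hz : z ≤ 2 ^ (1 / (8 * n) * s)) : (2 * z) ^ n < exp (s / 4) := by
  have hn₀ : (0 : ℝ) < n := by exact_mod_cast hn
  calc (2 * z) ^ n ≤ (2 * 2 ^ (1 / (8 * n) * s)) ^ n := by gcongr
    _ = exp (log 2 * (n + s / 8)) := by
        rw [← rpow_natCast, mul_rpow two_pos.le (by positivity), ← rpow_mul two_pos.le,
          ← rpow_add two_pos, rpow_def_of_pos two_pos]
        congr 2
        field_simp
    _ < exp (s / 4) := by
        gcongr
        nlinarith [log_two_lt_d9, log_pos one_lt_two]

theorem exists_forall_card_biUnion_fiberPartition_le {ι κ : Type*} [Fintype ι] [DecidableEq ι]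
    [Nonempty ι] [Fintype κ] [DecidableEq κ] {m : ℕ} (hm : 0 < m)
    (hκ : ((2 * Fintype.card κ) ^ Fintype.card ι : ℝ) < exp (√m / 4)) :
    ∃ ω : Fin m → κ → ι, ∀ (T : Finset ι) (f : ι → κ), Set.InjOn f T →
      (#(T.biUnion fun i => fiberPartition ω (f i) i) : ℝ) ≤
        (1 - (1 - 1 / Fintype.card ι : ℝ) ^ #T) * m + (m : ℝ) ^ ((3 : ℝ) / 4) := by
  let I : Finset (Finset ι × (ι → κ)) := {Tf | Set.InjOn Tf.2 Tf.1}
  have hI : (#I : ℝ) ≤ (2 * Fintype.card κ) ^ Fintype.card ι := calc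
    (#I : ℝ) ≤ Fintype.card (Finset ι × (ι → κ)) := by exact_mod_cast card_le_univ I
    _ = (2 * Fintype.card κ) ^ Fintype.card ι := by
        simp [Fintype.card_prod, Fintype.card_finset, mul_pow]
  have hcard : (0 : ℝ) < Fintype.card (κ → ι) := by exact_mod_cast Fintype.card_pos
  obtain ⟨ω, hω⟩ := exists_forall_not_of_sum_card_lt I
    (fun Tf (ω : Fin m → κ → ι) => (1 - (1 - 1 / Fintype.card ι : ℝ) ^ #Tf.1) * m +
      (m : ℝ) ^ ((3 : ℝ) / 4) < #(Tf.1.biUnion fun i => fiberPartition ω (Tf.2 i) i)) <| by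
    rw [← Nat.cast_lt (α := ℝ), Nat.cast_sum, Fintype.card_fun, Fintype.card_fin, Nat.cast_pow]
    calc _ ≤ #I * ((Fintype.card (κ → ι) : ℝ) ^ m * exp (-(√m / 4))) := by
          rw [← nsmul_eq_mul]
          exact sum_le_card_nsmul _ _ _ fun Tf hTf =>
            card_filter_lt_card_biUnion_fiberPartition_le hm (mem_filter.1 hTf).2
      _ = (Fintype.card (κ → ι) : ℝ) ^ m * (#I / exp (√m / 4)) := by
          rw [exp_neg]; ring
      _ < (Fintype.card (κ → ι) : ℝ) ^ m :=
          mul_lt_of_lt_one_right (by positivity) ((div_lt_one (exp_pos _)).2 (hI.trans_lt hκ))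
  exact ⟨ω, fun T f hf => not_lt.1 (hω (T, f) (by simpa [I] using hf))⟩

/-- For every `n ≥ 2` there exist constants `κ > 0` and `m₀` such that for every `m ≥ m₀`
and every `z` with `1 ≤ z ≤ 2^{κ√m}` there exist `z` ordered partitions of `[m]` into `n`
labeled parts such that for every `T ⊆ [n]` and every map `ℓ` injective on `T`,
`|∪_{i∈T} A_{ℓ(i),i}| ≤ (1 − (1 − 1/n)^{|T|})·m + m^{3/4}`. -/
theorem exists_partitions_small_unions (n : ℕ) (hn : 2 ≤ n) :
    ∃ κ : ℝ, 0 < κ ∧ ∃ m₀ : ℕ, ∀ m : ℕ, m₀ ≤ m →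
      ∀ z : ℕ, 1 ≤ z → (z : ℝ) ≤ 2 ^ (κ * Real.sqrt m) →
        ∃ A : Fin z → Fin n → Finset (Fin m),
          (∀ ℓ, (∀ i j, i ≠ j → Disjoint (A ℓ i) (A ℓ j)) ∧
            Finset.univ.biUnion (A ℓ) = Finset.univ) ∧
          ∀ (T : Finset (Fin n)) (f : Fin n → Fin z), Set.InjOn f ↑T →
            ((T.biUnion (fun i => A (f i) i)).card : ℝ) ≤
              (1 - (1 - 1 / (n : ℝ)) ^ T.card) * m + (m : ℝ) ^ ((3 : ℝ) / 4) := by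
  have hn₀ : 0 < n := by omega
  have : NeZero n := ⟨hn₀.ne'⟩
  refine ⟨1 / (8 * n), by positivity, 64 * n ^ 2, fun m hm z _ hz => ?_⟩
  have hm₀ : 0 < m := by nlinarith
  have hsqrt : (8 * n : ℝ) ≤ √m := by
    rw [le_sqrt' (by positivity)]
    exact_mod_cast (by nlinarith : (8 * n) ^ 2 ≤ m)
  have hexp := two_mul_pow_lt_exp hn₀ (Nat.cast_nonneg z) hsqrt hz
  obtain ⟨ω, hω⟩ := exists_forall_card_biUnion_fiberPartition_le (ι := Fin n) (κ := Fin z) hm₀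
    (by simpa only [Fintype.card_fin] using hexp)
  refine ⟨fiberPartition ω, fun ℓ => ⟨fun i j => disjoint_fiberPartition ω ℓ,
    biUnion_fiberPartition ω ℓ⟩, fun T f hf => ?_⟩
  simpa only [Fintype.card_fin] using hω T f hf
end

section
/- Let n ≥ 2 and k ≥ n + 1 be integers with k ≡ 1 (mod n), let m = kn, let p_1, …, p_{k(n−1)+1} be nonnegative reals, and set s = Σ_{j=1}^{(k−1)(n−1)} |(p_j − p_{j+n}) · Π_{i=1}^{n−1} p_{j+i}|. Assume s > 0 and Π_{ℓ=1}^{n} p_ℓ ≥ m·s. Define q_1, …, q_{k(n−1)+1} recursively by q_j = p_j for 1 ≤ j ≤ n and q_j = q_{j−n} − s / Π_{ℓ=1}^{n−1} q_{j−ℓ} for n < j ≤ k(n−1)+1. Then for all i ∈ {1, …, n} and all integers j ≥ 0 with jn + i ≤ k(n−1) + 1, (q_i − q_{jn+i}) · Π_{ℓ∈[n], ℓ≠i} q_ℓ ≤ j·n·s. -/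
/-!
Write `W r = q_r ⋯ q_{r+n-1}` for the product of `n` consecutive terms. The recurrence is built so
that `W (r + 1) = W r - s` exactly, hence `W (t + 1) = W 1 - t s`; the hypothesis `W 1 ≥ k n s`
keeps every window positive, so all `q_j` are positive and `q` decreases along each residue class
mod `n`. Going from `q_{jn+i}` to `q_{(j+1)n+i}` costs `s / D` with `D` the inner `n - 1` factors of
the window at `r = jn + i`, and `W 1 ≤ n W r ≤ n q_i D` bounds the cost, after multiplying by the
factors `q_ℓ` (`ℓ ≠ i`) of `W 1`, by `n s`.
-/

open Finset

def WindowRecurrence (q : ℕ → ℝ) (n N : ℕ) (s : ℝ) : Prop :=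
  ∀ j, n < j → j ≤ N → q j = q (j - n) - s / ∏ ℓ ∈ Icc 1 (n - 1), q (j - ℓ)

def windowProd (q : ℕ → ℝ) (n r : ℕ) : ℝ := ∏ m ∈ Ico r (r + n), q m

section

variable {q : ℕ → ℝ} {n N r : ℕ} {s : ℝ}

theorem prod_Icc_one_sub_eq_prod_Ico (q : ℕ → ℝ) (n r : ℕ) :
    ∏ ℓ ∈ Icc 1 (n - 1), q (r + n - ℓ) = ∏ m ∈ Ico (r + 1) (r + n), q m := by
  refine prod_nbij' (fun ℓ => r + n - ℓ) (fun m => r + n - m) ?_ ?_ ?_ ?_ fun _ _ => rfl <;>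
    intro a ha <;> simp only [mem_Icc, mem_Ico] at ha ⊢ <;>
    omega

theorem prod_Ico_pos (hpos : ∀ m, 1 ≤ m → m < N → 0 < q m) (hN : r + n ≤ N) :
    0 < ∏ m ∈ Ico (r + 1) (r + n), q m :=
  prod_pos fun m hm => hpos m (by simp at hm; omega) (by simp at hm; omega)

theorem windowProd_one : windowProd q n 1 = ∏ m ∈ Icc 1 n, q m := by
  rw [windowProd, add_comm, Ico_add_one_right_eq_Icc]

theorem windowProd_eq_mul_prod (hn : 0 < n) :
    windowProd q n r = q r * ∏ m ∈ Ico (r + 1) (r + n), q m :=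
  prod_eq_prod_Ico_succ_bot (by omega) q

theorem windowProd_add_one_eq_prod_mul (hn : 0 < n) :
    windowProd q n (r + 1) = (∏ m ∈ Ico (r + 1) (r + n), q m) * q (r + n) := by
  rw [windowProd, show r + 1 + n = r + n + 1 by omega, prod_Ico_succ_top (by omega)]

namespace WindowRecurrence

theorem mono {M : ℕ} (h : WindowRecurrence q n N s) (hM : M ≤ N) : WindowRecurrence q n M s :=
  fun j hj hjM => h j hj (hjM.trans hM)

theorem apply_add (h : WindowRecurrence q n N s) (hr : 1 ≤ r) (hN : r + n ≤ N) :
    q (r + n) = q r - s / ∏ m ∈ Ico (r + 1) (r + n), q m := by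
  rw [h (r + n) (by omega) hN, Nat.add_sub_cancel, prod_Icc_one_sub_eq_prod_Ico]

theorem windowProd_add_one (h : WindowRecurrence q n N s) (hn : 0 < n) (hr : 1 ≤ r)
    (hN : r + n ≤ N) (hD : ∏ m ∈ Ico (r + 1) (r + n), q m ≠ 0) :
    windowProd q n (r + 1) = windowProd q n r - s := by
  rw [windowProd_add_one_eq_prod_mul hn, h.apply_add hr hN, windowProd_eq_mul_prod hn]
  field_simp

theorem windowProd_add_one_eq_windowProd_one_sub (h : WindowRecurrence q n N s) (hn : 0 < n)
    (hpos : ∀ m, 1 ≤ m → m < N → 0 < q m) :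
    ∀ t, t + n ≤ N → windowProd q n (t + 1) = windowProd q n 1 - t * s
  | 0, _ => by simp
  | t + 1, ht => by
    rw [h.windowProd_add_one hn (by omega) (by omega) (prod_Ico_pos hpos (by omega)).ne',
      h.windowProd_add_one_eq_windowProd_one_sub hn hpos t (by omega)]
    push_cast
    ring

theorem pos_of_lt (h : WindowRecurrence q n N s) (hn : 0 < n)
    (hq : ∀ m, 1 ≤ m → m ≤ n → 0 < q m)
    (hW : ∀ t, t + n < N → (t : ℝ) * s < windowProd q n 1) :
    ∀ m, 1 ≤ m → m < N → 0 < q m := by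
  suffices key : ∀ t, t + n ≤ N → ∀ m, 1 ≤ m → m < t + n → 0 < q m by
    intro m hm1 hm
    rcases le_or_gt m n with hmn | hnm
    · exact hq m hm1 hmn
    · exact key (N - n) (by omega) m hm1 (by omega)
  intro t
  induction t with
  | zero => exact fun _ m hm1 hm => hq m hm1 (by omega)
  | succ t ih =>
    intro ht
    have hpos := ih (by omega)
    -- the window `q_{t+1} ⋯ q_{t+n}` is positive and so are all its factors but the last
    have hWt := (h.mono (by omega : t + n ≤ N)).windowProd_add_one_eq_windowProd_one_sub hn hpos t le_rfl
    have hWpos : 0 < windowProd q n (t + 1) := by linarith [hW t (by omega)]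
    rw [windowProd_add_one_eq_prod_mul hn] at hWpos
    have htop : 0 < q (t + n) := pos_of_mul_pos_right hWpos (prod_Ico_pos hpos le_rfl).le
    intro m hm1 hm
    rcases Nat.lt_or_ge m (t + n) with hlt | hge
    · exact hpos m hm1 hlt
    · rwa [show m = t + n by omega]

theorem apply_mul_add_le (h : WindowRecurrence q n N s) (hs : 0 ≤ s)
    (hpos : ∀ m, 1 ≤ m → m < N → 0 < q m) {i : ℕ} (hi : 1 ≤ i) :
    ∀ j, j * n + i ≤ N → q (j * n + i) ≤ q i
  | 0, _ => by simp
  | j + 1, hj => by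
    rw [Nat.succ_mul, add_right_comm] at hj ⊢
    rw [h.apply_add (by omega) hj]
    have hD := prod_Ico_pos hpos hj
    linarith [div_nonneg hs hD.le, h.apply_mul_add_le hs hpos hi j (by omega)]

theorem prod_erase_le_mul_prod_Ico (h : WindowRecurrence q n N s) (hs : 0 ≤ s)
    (hpos : ∀ m, 1 ≤ m → m < N → 0 < q m)
    (hW : ∀ t, t + n < N → (n : ℝ) * t * s ≤ (n - 1) * windowProd q n 1)
    {i : ℕ} (hi1 : 1 ≤ i) (hin : i ≤ n) {j : ℕ} (hj : j * n + i + n ≤ N) :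
    ∏ ℓ ∈ (Icc 1 n).erase i, q ℓ ≤ n * ∏ m ∈ Ico (j * n + i + 1) (j * n + i + n), q m := by
  have hn : 0 < n := by omega
  set r := j * n + i
  have hD := prod_Ico_pos hpos hj
  have hqi : 0 < q i := hpos i hi1 (by omega)
  have hP : q i * ∏ ℓ ∈ (Icc 1 n).erase i, q ℓ = windowProd q n 1 := by
    rw [mul_prod_erase _ _ (mem_Icc.2 ⟨hi1, hin⟩), windowProd_one]
  have hWr : q r * ∏ m ∈ Ico (r + 1) (r + n), q m = windowProd q n 1 - (r - 1 : ℕ) * s := by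
    rw [← windowProd_eq_mul_prod hn, ← h.windowProd_add_one_eq_windowProd_one_sub hn hpos (r - 1) (by omega),
      Nat.sub_add_cancel (by omega)]
  have hmono := mul_le_mul_of_nonneg_right (h.apply_mul_add_le hs hpos hi1 j (by omega)) hD.le
  -- `W 1 ≤ n W r`, i.e. `n (r - 1) s ≤ (n - 1) W 1`
  have hWr_le := hW (r - 1) (by omega)
  refine le_of_mul_le_mul_left ?_ hqi
  nlinarith

theorem sub_mul_prod_erase_le (h : WindowRecurrence q n N s) (hs : 0 ≤ s)
    (hq : ∀ m, 1 ≤ m → m ≤ n → 0 < q m)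
    (hW : ∀ t, t + n < N → (n : ℝ) * t * s ≤ (n - 1) * windowProd q n 1)
    {i : ℕ} (hi1 : 1 ≤ i) (hin : i ≤ n) :
    ∀ j, j * n + i ≤ N → (q i - q (j * n + i)) * ∏ ℓ ∈ (Icc 1 n).erase i, q ℓ ≤ j * n * s := by
  have hn : 0 < n := by omega
  have hW1 : 0 < windowProd q n 1 := by
    rw [windowProd_one]
    exact prod_pos fun m hm => hq m (mem_Icc.1 hm).1 (mem_Icc.1 hm).2
  have hpos := h.pos_of_lt hn hq fun t ht => by
    have : (1 : ℝ) ≤ n := by exact_mod_cast hn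
    nlinarith [hW t ht]
  intro j
  induction j with
  | zero => simp
  | succ j ih =>
    intro hj
    rw [Nat.succ_mul, add_right_comm] at hj ⊢
    have hD := prod_Ico_pos hpos hj
    have hPD := h.prod_erase_le_mul_prod_Ico hs hpos hW hi1 hin hj
    rw [h.apply_add (by omega) hj]
    calc (q i - (q (j * n + i) - s / ∏ m ∈ Ico (j * n + i + 1) (j * n + i + n), q m)) *
          ∏ ℓ ∈ (Icc 1 n).erase i, q ℓ
        = (q i - q (j * n + i)) * ∏ ℓ ∈ (Icc 1 n).erase i, q ℓ +
          s * ((∏ ℓ ∈ (Icc 1 n).erase i, q ℓ) / ∏ m ∈ Ico (j * n + i + 1) (j * n + i + n), q m) := by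
          ring
      _ ≤ j * n * s + s * n :=
        add_le_add (ih (by omega)) (mul_le_mul_of_nonneg_left ((div_le_iff₀ hD).2 hPD) hs)
      _ = ↑(j + 1) * n * s := by push_cast; ring

end WindowRecurrence

end

theorem what_the_inequality_general
    (n k : ℕ) (hk : n + 1 ≤ k)
    (p : ℕ → ℝ) (hp : ∀ j, 1 ≤ j → j ≤ k * (n - 1) + 1 → 0 ≤ p j)
    (s : ℝ)
    (hspos : 0 < s)
    (hprod : ((k * n : ℕ) : ℝ) * s ≤ ∏ ℓ ∈ Finset.Icc 1 n, p ℓ)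
    (q : ℕ → ℝ)
    (hq1 : ∀ j, 1 ≤ j → j ≤ n → q j = p j)
    (hq2 : ∀ j, n < j → j ≤ k * (n - 1) + 1 →
      q j = q (j - n) - s / ∏ ℓ ∈ Finset.Icc 1 (n - 1), q (j - ℓ))
    (i : ℕ) (hi1 : 1 ≤ i) (hin : i ≤ n)
    (j : ℕ) (hji : j * n + i ≤ k * (n - 1) + 1) :
    (q i - q (j * n + i)) * ∏ ℓ ∈ (Finset.Icc 1 n).erase i, q ℓ ≤ (j : ℝ) * n * s := by
  have hn : 0 < n := by omega
  have hW1 : windowProd q n 1 = ∏ ℓ ∈ Icc 1 n, p ℓ := by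
    rw [windowProd_one]
    exact prod_congr rfl fun m hm => hq1 m (mem_Icc.1 hm).1 (mem_Icc.1 hm).2
  have hpos : 0 < ∏ ℓ ∈ Icc 1 n, p ℓ :=
    lt_of_lt_of_le (mul_pos (by exact_mod_cast Nat.mul_pos (by omega) hn) hspos) hprod
  refine WindowRecurrence.sub_mul_prod_erase_le hq2 hspos.le ?_ ?_ hi1 hin j hji
  · intro m hm1 hmn
    rw [hq1 m hm1 hmn]
    have : n - 1 ≤ k * (n - 1) := Nat.le_mul_of_pos_left _ (by omega)
    refine (hp m hm1 (by omega)).lt_of_ne fun hm => hpos.ne' ?_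
    exact prod_eq_zero (mem_Icc.2 ⟨hm1, hmn⟩) hm.symm
  · intro t ht
    have hkn : t + k ≤ k * n := by
      have : k * n = k * (n - 1) + k := by
        rw [← Nat.mul_add_one, Nat.sub_add_cancel hn]
      omega
    have hkn' : (t : ℝ) + k ≤ k * n := by exact_mod_cast hkn
    have hn1 : (1 : ℝ) ≤ n := by exact_mod_cast hn
    push_cast at hprod
    rw [hW1]
    calc (n : ℝ) * t * s ≤ n * (k * n - k) * s := by gcongr; linarith
      _ = (n - 1) * (k * n * s) := by ring
      _ ≤ (n - 1) * ∏ ℓ ∈ Icc 1 n, p ℓ := by gcongr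

/-- For `n ≥ 2`, `k ≥ n+1` with `k ≡ 1 (mod n)`, `m = kn`, nonnegative reals
`p_1, …, p_{k(n−1)+1}`, `s = Σ_j |(p_j − p_{j+n}) · Π_{i=1}^{n−1} p_{j+i}|` with `s > 0`
and `Π_{ℓ=1}^n p_ℓ ≥ m·s`, and `q` defined recursively by `q_j = p_j` for `j ≤ n` and
`q_j = q_{j−n} − s / Π_{ℓ=1}^{n−1} q_{j−ℓ}` for `n < j ≤ k(n−1)+1`: for all `i ∈ [n]`
and `j ≥ 0` with `jn + i ≤ k(n−1)+1`,
`(q_i − q_{jn+i}) · Π_{ℓ∈[n], ℓ≠i} q_ℓ ≤ j·n·s`. -/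
theorem what_the_inequality
    (n k : ℕ) (hn : 2 ≤ n) (hk : n + 1 ≤ k) (hmod : k % n = 1)
    (p : ℕ → ℝ) (hp : ∀ j, 1 ≤ j → j ≤ k * (n - 1) + 1 → 0 ≤ p j)
    (s : ℝ)
    (hs : s = ∑ j ∈ Finset.Icc 1 ((k - 1) * (n - 1)),
      |(p j - p (j + n)) * ∏ i ∈ Finset.Icc 1 (n - 1), p (j + i)|)
    (hspos : 0 < s)
    (hprod : ((k * n : ℕ) : ℝ) * s ≤ ∏ ℓ ∈ Finset.Icc 1 n, p ℓ)
    (q : ℕ → ℝ)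
    (hq1 : ∀ j, 1 ≤ j → j ≤ n → q j = p j)
    (hq2 : ∀ j, n < j → j ≤ k * (n - 1) + 1 →
      q j = q (j - n) - s / ∏ ℓ ∈ Finset.Icc 1 (n - 1), q (j - ℓ))
    (i : ℕ) (hi1 : 1 ≤ i) (hin : i ≤ n)
    (j : ℕ) (hji : j * n + i ≤ k * (n - 1) + 1) :
    (q i - q (j * n + i)) * ∏ ℓ ∈ (Finset.Icc 1 n).erase i, q ℓ ≤ (j : ℝ) * n * s :=
  what_the_inequality_general n k hk p hp s hspos hprod q hq1 hq2 i hi1 hin j hji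
end
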